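/- Let a, ν, v : ℕ → ℕ satisfy: v 5 ≥ 3 and ν 5 ≥ 26, and for every natural number n with 6 ≤ n ≤ 12: (i) a (n−1) ≥ ν (n−1) + 1; (ii) 2·(n−1)·(v n) ≥ a (n−1) · v (n−1); (iii) ν n + 2·n ≥ 2·ν (n−1) + 5; (iv) ν n ≥ a (n−1) + v n. Then a 5 ≥ 27, a 6 ≥ 46, a 7 ≥ 82, a 8 ≥ 288, a 9 ≥ 3979, a 10 ≥ 819675, a 11 ≥ 33431059633, and moreover ν 6 ≥ 45, ν 7 ≥ 81, ν 8 ≥ 287, ν 9 ≥ 3978, ν 10 ≥ 819674, ν 11 ≥ 33431059632. -/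
import Mathlib

/-- Intermediate facet-number and ν bounds computed in Theorem 3.2. -/
theorem facet_and_nu_bounds (a ν v : ℕ → ℕ)
    (hv5 : 3 ≤ v 5) (hν5 : 26 ≤ ν 5)
    (hi : ∀ n : ℕ, 6 ≤ n → n ≤ 12 → ν (n - 1) + 1 ≤ a (n - 1))
    (hii : ∀ n : ℕ, 6 ≤ n → n ≤ 12 → a (n - 1) * v (n - 1) ≤ 2 * (n - 1) * v n)
    (hiii : ∀ n : ℕ, 6 ≤ n → n ≤ 12 → 2 * ν (n - 1) + 5 ≤ ν n + 2 * n)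
    (hiv : ∀ n : ℕ, 6 ≤ n → n ≤ 12 → a (n - 1) + v n ≤ ν n) :
    27 ≤ a 5 ∧ 46 ≤ a 6 ∧ 82 ≤ a 7 ∧ 288 ≤ a 8 ∧ 3979 ≤ a 9 ∧
      819675 ≤ a 10 ∧ 33431059633 ≤ a 11 ∧
      45 ≤ ν 6 ∧ 81 ≤ ν 7 ∧ 287 ≤ ν 8 ∧ 3978 ≤ ν 9 ∧
      819674 ≤ ν 10 ∧ 33431059632 ≤ ν 11 := by
  have ha5 : 27 ≤ a 5 := by have h := hi 6 (by norm_num) (by norm_num); norm_num at h; omega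
  have hv6 : 9 ≤ v 6 := by
    have h := hii 6 (by norm_num) (by norm_num)
    have := Nat.mul_le_mul ha5 hv5
    simp only [show (6:ℕ)-1 = 5 from rfl] at h
    omega
  have hν6 : 45 ≤ ν 6 := by have h := hiii 6 (by norm_num) (by norm_num); norm_num at h; omega
  have ha6 : 46 ≤ a 6 := by have h := hi 7 (by norm_num) (by norm_num); norm_num at h; omega
  have hv7 : 35 ≤ v 7 := by
    have h := hii 7 (by norm_num) (by norm_num)
    have := Nat.mul_le_mul ha6 hv6
    simp only [show (7:ℕ)-1 = 6 from rfl] at h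
    omega
  have hν7 : 81 ≤ ν 7 := by have h := hiv 7 (by norm_num) (by norm_num); norm_num at h; omega
  have ha7 : 82 ≤ a 7 := by have h := hi 8 (by norm_num) (by norm_num); norm_num at h; omega
  have hv8 : 205 ≤ v 8 := by
    have h := hii 8 (by norm_num) (by norm_num)
    have := Nat.mul_le_mul ha7 hv7
    simp only [show (8:ℕ)-1 = 7 from rfl] at h
    omega
  have hν8 : 287 ≤ ν 8 := by have h := hiv 8 (by norm_num) (by norm_num); norm_num at h; omega
  have ha8 : 288 ≤ a 8 := by have h := hi 9 (by norm_num) (by norm_num); norm_num at h; omega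
  have hv9 : 3690 ≤ v 9 := by
    have h := hii 9 (by norm_num) (by norm_num)
    have := Nat.mul_le_mul ha8 hv8
    simp only [show (9:ℕ)-1 = 8 from rfl] at h
    omega
  have hν9 : 3978 ≤ ν 9 := by have h := hiv 9 (by norm_num) (by norm_num); norm_num at h; omega
  have ha9 : 3979 ≤ a 9 := by have h := hi 10 (by norm_num) (by norm_num); norm_num at h; omega
  have hv10 : 815695 ≤ v 10 := by
    have h := hii 10 (by norm_num) (by norm_num)
    have := Nat.mul_le_mul ha9 hv9
    simp only [show (10:ℕ)-1 = 9 from rfl] at h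
    omega
  have hν10 : 819674 ≤ ν 10 := by have h := hiv 10 (by norm_num) (by norm_num); norm_num at h; omega
  have ha10 : 819675 ≤ a 10 := by have h := hi 11 (by norm_num) (by norm_num); norm_num at h; omega
  have hv11 : 33430239957 ≤ v 11 := by
    have h := hii 11 (by norm_num) (by norm_num)
    have := Nat.mul_le_mul ha10 hv10
    simp only [show (11:ℕ)-1 = 10 from rfl] at h
    omega
  have hν11 : 33431059632 ≤ ν 11 := by have h := hiv 11 (by norm_num) (by norm_num); norm_num at h; omega
  have ha11 : 33431059633 ≤ a 11 := by have h := hi 12 (by norm_num) (by norm_num); norm_num at h; omega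
  exact ⟨ha5, ha6, ha7, ha8, ha9, ha10, ha11, hν6, hν7, hν8, hν9, hν10, hν11⟩
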